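/- Let Y : Fin m → Fin n → Fin n → ℝ, X : Fin m → Fin n → ℝ, and define R a b c d = ∑_N Y^N a b · Y^N c d, P a b c = ∑_N Y^N a b · X^N c, M a b = ∑_N X^N a · X^N b. Then for all a, b ∈ Fin n: −2 ∑_{c,d} R a c b d · M c d − 2 ∑_{c,d} P a c d · P b d c = −∑_{N,M} (Y^N a c X^M c + Y^M a c X^N c)(Y^N b d X^M d + Y^M b d X^N d), where repeated lower indices c, d are summed. -/
import Mathlib

open Finset

private lemma swap4 {m n : ℕ} (f : Fin n → Fin n → Fin m → Fin m → ℝ) :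
    ∑ c, ∑ d, ∑ N, ∑ M', f c d N M' = ∑ N, ∑ M', ∑ c, ∑ d, f c d N M' := by
  have h1 : ∀ c : Fin n, (∑ d, ∑ N, ∑ M', f c d N M') = ∑ N, ∑ d, ∑ M', f c d N M' :=
    fun c => Finset.sum_comm
  simp only [h1]
  rw [Finset.sum_comm]
  have h2 : ∀ (N : Fin m) (c : Fin n), (∑ d, ∑ M', f c d N M') = ∑ M', ∑ d, f c d N M' :=
    fun N c => Finset.sum_comm
  simp only [h2]
  exact Finset.sum_congr rfl fun N _ => Finset.sum_comm

/-- `-2 R_{acbd} M_{cd} - 2 P_{acd} P_{bdc}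
      = -(Y^N_{ac}X^M_c + Y^M_{ac}X^N_c)(Y^N_{bd}X^M_d + Y^M_{bd}X^N_d)`
with the sum-of-squares decomposition of `R`, `P`, `M`. -/
theorem stmt_16 {m n : ℕ} (Y : Fin m → Fin n → Fin n → ℝ) (X : Fin m → Fin n → ℝ)
    (R : Fin n → Fin n → Fin n → Fin n → ℝ)
    (hR : ∀ a b c d, R a b c d = ∑ N, Y N a b * Y N c d)
    (P : Fin n → Fin n → Fin n → ℝ)
    (hP : ∀ a b c, P a b c = ∑ N, Y N a b * X N c)
    (M : Fin n → Fin n → ℝ)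
    (hM : ∀ a b, M a b = ∑ N, X N a * X N b) :
    ∀ a b : Fin n,
      -2 * (∑ c, ∑ d, R a c b d * M c d) - 2 * (∑ c, ∑ d, P a c d * P b d c) =
        - ∑ N, ∑ M', ((∑ c, Y N a c * X M' c) + ∑ c, Y M' a c * X N c)
            * ((∑ d, Y N b d * X M' d) + ∑ d, Y M' b d * X N d) := by
  intro a b
  have T1 : (∑ c, ∑ d, R a c b d * M c d)
      = ∑ N, ∑ M', ∑ c, ∑ d, Y N a c * Y N b d * (X M' c * X M' d) := by
    rw [← swap4]
    refine Finset.sum_congr rfl fun c _ => Finset.sum_congr rfl fun d _ => ?_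
    rw [hR, hM, Finset.sum_mul_sum]
  have T2 : (∑ c, ∑ d, P a c d * P b d c)
      = ∑ N, ∑ M', ∑ c, ∑ d, Y N a c * X N d * (Y M' b d * X M' c) := by
    rw [← swap4]
    refine Finset.sum_congr rfl fun c _ => Finset.sum_congr rfl fun d _ => ?_
    rw [hP, hP, Finset.sum_mul_sum]
  have E : ∀ N M', ((∑ c, Y N a c * X M' c) + ∑ c, Y M' a c * X N c)
            * ((∑ d, Y N b d * X M' d) + ∑ d, Y M' b d * X N d)
      = (∑ c, ∑ d, Y N a c * Y N b d * (X M' c * X M' d))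
        + (∑ c, ∑ d, Y N a c * X N d * (Y M' b d * X M' c))
        + ((∑ c, ∑ d, Y M' a c * Y M' b d * (X N c * X N d))
        + (∑ c, ∑ d, Y M' a c * X M' d * (Y N b d * X N c))) := by
    intro N M'
    rw [add_mul, mul_add, mul_add]
    have eAC : (∑ c, Y N a c * X M' c) * (∑ d, Y N b d * X M' d)
        = ∑ c, ∑ d, Y N a c * Y N b d * (X M' c * X M' d) := by
      rw [Finset.sum_mul_sum]
      exact Finset.sum_congr rfl fun c _ => Finset.sum_congr rfl fun d _ => by ring
    have eAD : (∑ c, Y N a c * X M' c) * (∑ d, Y M' b d * X N d)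
        = ∑ c, ∑ d, Y N a c * X N d * (Y M' b d * X M' c) := by
      rw [Finset.sum_mul_sum]
      exact Finset.sum_congr rfl fun c _ => Finset.sum_congr rfl fun d _ => by ring
    have eBC : (∑ c, Y M' a c * X N c) * (∑ d, Y N b d * X M' d)
        = ∑ c, ∑ d, Y M' a c * X M' d * (Y N b d * X N c) := by
      rw [Finset.sum_mul_sum]
      exact Finset.sum_congr rfl fun c _ => Finset.sum_congr rfl fun d _ => by ring
    have eBD : (∑ c, Y M' a c * X N c) * (∑ d, Y M' b d * X N d)
        = ∑ c, ∑ d, Y M' a c * Y M' b d * (X N c * X N d) := by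
      rw [Finset.sum_mul_sum]
      exact Finset.sum_congr rfl fun c _ => Finset.sum_congr rfl fun d _ => by ring
    rw [eAC, eAD, eBC, eBD]; ring
  rw [T1, T2]
  simp only [E, Finset.sum_add_distrib]
  have sw1 : (∑ N, ∑ M', ∑ c, ∑ d, Y M' a c * Y M' b d * (X N c * X N d))
      = ∑ N, ∑ M', ∑ c, ∑ d, Y N a c * Y N b d * (X M' c * X M' d) := Finset.sum_comm
  have sw2 : (∑ N, ∑ M', ∑ c, ∑ d, Y M' a c * X M' d * (Y N b d * X N c))
      = ∑ N, ∑ M', ∑ c, ∑ d, Y N a c * X N d * (Y M' b d * X M' c) := by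
    exact Finset.sum_comm
  rw [sw1, sw2]
  ring
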